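/- Let S be a Γ-semigroup, γ₀ ∈ Γ with S_{γ₀} completely simple, and let ε₀ be a primitive idempotent of S_{γ₀}. Then γ₀ε₀γ₀ is a primitive idempotent of the semigroup Σ' = Σ \ Γ. -/

import Mathlib

open FreeSemigroup

section GammaSemigroup

variable {S Γ : Type}

/-- One-step rewriting on words over S ⊕ Γ. -/
inductive GStep (m : S → Γ → S → S) (γ₀ : Γ) : List (S ⊕ Γ) → List (S ⊕ Γ) → Prop
  | gg (u v : List (S ⊕ Γ)) (γ₁ γ₂ : Γ) :
      GStep m γ₀ (u ++ Sum.inr γ₁ :: Sum.inr γ₂ :: v) (u ++ Sum.inr γ₁ :: v)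
  | xgy (u v : List (S ⊕ Γ)) (x : S) (γ : Γ) (y : S) :
      GStep m γ₀ (u ++ Sum.inl x :: Sum.inr γ :: Sum.inl y :: v) (u ++ Sum.inl (m x γ y) :: v)
  | xy (u v : List (S ⊕ Γ)) (x y : S) :
      GStep m γ₀ (u ++ Sum.inl x :: Sum.inl y :: v) (u ++ Sum.inl (m x γ₀ y) :: v)

/-- The defining relations on the free semigroup on S ⊕ Γ. -/
def GRel (m : S → Γ → S → S) (γ₀ : Γ) :
    FreeSemigroup (S ⊕ Γ) → FreeSemigroup (S ⊕ Γ) → Prop :=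
  fun a b =>
    (∃ γ₁ γ₂ : Γ, a = of (Sum.inr γ₁) * of (Sum.inr γ₂) ∧ b = of (Sum.inr γ₁)) ∨
    (∃ (x y : S) (γ : Γ), a = of (Sum.inl x) * of (Sum.inr γ) * of (Sum.inl y) ∧
      b = of (Sum.inl (m x γ y))) ∨
    (∃ x y : S, a = of (Sum.inl x) * of (Sum.inl y) ∧ b = of (Sum.inl (m x γ₀ y)))

/-- The congruence generated by the defining relations. -/
def GCon (m : S → Γ → S → S) (γ₀ : Γ) : Con (FreeSemigroup (S ⊕ Γ)) := conGen (GRel m γ₀)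

/-- The universal semigroup Σ of the Γ-semigroup S. -/
abbrev USem (m : S → Γ → S → S) (γ₀ : Γ) := (GCon m γ₀).Quotient

/-- The canonical map μ : S → Σ. -/
def gmu (m : S → Γ → S → S) (γ₀ : Γ) (x : S) : USem m γ₀ :=
  ((of (Sum.inl x) : FreeSemigroup (S ⊕ Γ)) : (GCon m γ₀).Quotient)

/-- The canonical map Γ → Σ. -/
def giota (m : S → Γ → S → S) (γ₀ : Γ) (γ : Γ) : USem m γ₀ :=
  ((of (Sum.inr γ) : FreeSemigroup (S ⊕ Γ)) : (GCon m γ₀).Quotient)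

/-- Principal left ideal of an element of a semigroup. -/
def pLeft {T : Type} [Semigroup T] (a : T) : Set T := {w | ∃ t : T, w = t * a} ∪ {a}

/-- Principal right ideal of an element of a semigroup. -/
def pRight {T : Type} [Semigroup T] (a : T) : Set T := {w | ∃ t : T, w = a * t} ∪ {a}

/-- Principal left ideal in the Γ-semigroup: SΓx ∪ {x}. -/
def pLeftG (m : S → Γ → S → S) (x : S) : Set S := {y | ∃ (s : S) (γ : Γ), y = m s γ x} ∪ {x}

/-- Principal right ideal in the Γ-semigroup: xΓS ∪ {x}. -/
def pRightG (m : S → Γ → S → S) (x : S) : Set S := {y | ∃ (γ : Γ) (s : S), y = m x γ s} ∪ {x}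

/-- Green's H relation on the Γ-semigroup. -/
def HrelG (m : S → Γ → S → S) (a b : S) : Prop := pLeftG m a = pLeftG m b ∧ pRightG m a = pRightG m b

/-- S_δ is a simple semigroup: its only two-sided ideal is S itself. -/
def SimpleAt (m : S → Γ → S → S) (δ : Γ) : Prop :=
  ∀ J : Set S, J.Nonempty → (∀ t : S, ∀ j ∈ J, m t δ j ∈ J ∧ m j δ t ∈ J) → J = Set.univ

/-- e is an idempotent of S_δ. -/
def IdemAt (m : S → Γ → S → S) (δ : Γ) (e : S) : Prop := m e δ e = e

/-- e is a primitive idempotent of S_δ. -/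
def PrimAt (m : S → Γ → S → S) (δ : Γ) (e : S) : Prop :=
  IdemAt m δ e ∧ ∀ f, IdemAt m δ f → m e δ f = f → m f δ e = f → f = e

/-- S_δ is completely simple. -/
def CSimpleAt (m : S → Γ → S → S) (δ : Γ) : Prop := SimpleAt m δ ∧ ∃ e, PrimAt m δ e

/-- S_δ has no zero element. -/
def NoZeroAt (m : S → Γ → S → S) (δ : Γ) : Prop := ¬ ∃ z : S, ∀ t : S, m z δ t = z ∧ m t δ z = z

/-- L is a left ideal of S_δ. -/
def LIdealAt (m : S → Γ → S → S) (δ : Γ) (L : Set S) : Prop :=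
  L.Nonempty ∧ ∀ t : S, ∀ l ∈ L, m t δ l ∈ L

/-- L is a minimal left ideal of S_δ. -/
def MinLIdealAt (m : S → Γ → S → S) (δ : Γ) (L : Set S) : Prop :=
  LIdealAt m δ L ∧ ∀ L' ⊆ L, LIdealAt m δ L' → L' = L

/-- S_δ is a group. -/
def GroupAt (m : S → Γ → S → S) (δ : Γ) : Prop :=
  ∃ e : S, (∀ a, m e δ a = a ∧ m a δ e = a) ∧ ∀ a, ∃ b, m a δ b = e ∧ m b δ a = e

/-- G is a subgroup (a sub-semigroup that is a group) of the semigroup T. -/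
def IsSubgroupOf {T : Type} [Semigroup T] (G : Set T) : Prop :=
  (∀ a ∈ G, ∀ b ∈ G, a * b ∈ G) ∧
  ∃ e ∈ G, (∀ g ∈ G, e * g = g ∧ g * e = g) ∧ ∀ g ∈ G, ∃ h ∈ G, g * h = e ∧ h * g = e

/-- The set Σ' = Σ \ Γ. -/
def USem' (m : S → Γ → S → S) (γ₀ : Γ) : Set (USem m γ₀) := {w | ¬ ∃ γ : Γ, w = giota m γ₀ γ}

end GammaSemigroup

/-!
Right multiplication in `Σ` keeps the elements of the form `x` and `x γ` (with `x ∈ S`, `γ ∈ Γ`)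
in that form, so `γ₀ε₀γ₀ · f · γ₀ε₀γ₀ = γ₀ y γ₀` for some `y ∈ S`. The map `x ↦ γ₀ x γ₀` is a
homomorphism `S_{γ₀} → Σ'`, injective because `Σ` maps homomorphically onto its normal forms
(a letter `γ`, or `α x β` with optional letters `α, β ∈ Γ`). Hence an idempotent
`f ≤ γ₀ε₀γ₀` of `Σ'` is `γ₀ y γ₀` with `y ≤ ε₀` an idempotent of `S_{γ₀}`, and `y = ε₀`.
-/

section UniversalSemigroup

variable {S Γ : Type} {m : S → Γ → S → S} {γ₀ : Γ}

class IsGammaAssoc (m : S → Γ → S → S) : Prop where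
  assoc : ∀ (a b c : S) (α β : Γ), m (m a α b) β c = m a α (m b β c)

theorem giota_mul_giota (γ₁ γ₂ : Γ) : giota m γ₀ γ₁ * giota m γ₀ γ₂ = giota m γ₀ γ₁ :=
  (Con.eq _).mpr (ConGen.Rel.of _ _ (Or.inl ⟨γ₁, γ₂, rfl, rfl⟩))

theorem gmu_mul_giota_mul_gmu (x : S) (γ : Γ) (y : S) :
    gmu m γ₀ x * giota m γ₀ γ * gmu m γ₀ y = gmu m γ₀ (m x γ y) :=
  (Con.eq _).mpr (ConGen.Rel.of _ _ (Or.inr (Or.inl ⟨x, y, γ, rfl, rfl⟩)))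

theorem gmu_mul_gmu (x y : S) : gmu m γ₀ x * gmu m γ₀ y = gmu m γ₀ (m x γ₀ y) :=
  (Con.eq _).mpr (ConGen.Rel.of _ _ (Or.inr (Or.inr ⟨x, y, rfl, rfl⟩)))

def gmuForms (m : S → Γ → S → S) (γ₀ : Γ) : Set (USem m γ₀) :=
  Set.range (gmu m γ₀) ∪ {w | ∃ x γ, gmu m γ₀ x * giota m γ₀ γ = w}

theorem mul_mem_gmuForms {a : USem m γ₀} (ha : a ∈ gmuForms m γ₀) (u : USem m γ₀) :
    a * u ∈ gmuForms m γ₀ := by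
  induction u using Con.induction_on generalizing a with
  | H w =>
    induction w using FreeSemigroup.recOnMul generalizing a with
    | ih1 l =>
      rcases ha with ⟨x, rfl⟩ | ⟨x, γ, rfl⟩ <;> rcases l with y | δ
      · exact Or.inl ⟨m x γ₀ y, (gmu_mul_gmu x y).symm⟩
      · exact Or.inr ⟨x, δ, rfl⟩
      · exact Or.inl ⟨m x γ y, (gmu_mul_giota_mul_gmu x γ y).symm⟩
      · exact Or.inr ⟨x, γ, by rw [mul_assoc]; exact congrArg _ (giota_mul_giota γ δ).symm⟩
    | ih2 l w ihl ihw =>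
      rw [Con.coe_mul, ← mul_assoc]
      exact ihw (ihl ha)

theorem exists_gmu_eq_gmu_mul_giota_mul_mul_giota_mul_gmu (s : S) (δ : Γ) (u : USem m γ₀) (δ' : Γ)
    (t : S) : ∃ y, gmu m γ₀ s * giota m γ₀ δ * u * giota m γ₀ δ' * gmu m γ₀ t = gmu m γ₀ y := by
  rcases mul_mem_gmuForms (Or.inr ⟨s, δ, rfl⟩) u with ⟨x, hx⟩ | ⟨x, γ, hx⟩ <;> rw [← hx]
  · exact ⟨m x δ' t, gmu_mul_giota_mul_gmu x δ' t⟩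
  · exact ⟨m x γ t, by rw [mul_assoc _ (giota m γ₀ γ), giota_mul_giota, gmu_mul_giota_mul_gmu]⟩

def gsandwich (m : S → Γ → S → S) (γ₀ : Γ) (x : S) : USem m γ₀ :=
  giota m γ₀ γ₀ * gmu m γ₀ x * giota m γ₀ γ₀

theorem gsandwich_mul_gsandwich (x y : S) :
    gsandwich m γ₀ x * gsandwich m γ₀ y = gsandwich m γ₀ (m x γ₀ y) := by
  calc gsandwich m γ₀ x * gsandwich m γ₀ y
      = giota m γ₀ γ₀ * (gmu m γ₀ x * (giota m γ₀ γ₀ * giota m γ₀ γ₀) * gmu m γ₀ y) *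
          giota m γ₀ γ₀ := by simp only [gsandwich, mul_assoc]
    _ = gsandwich m γ₀ (m x γ₀ y) := by rw [giota_mul_giota, gmu_mul_giota_mul_gmu]; rfl

theorem exists_gsandwich_eq_gsandwich_mul_mul_gsandwich (x : S) (u : USem m γ₀) (x' : S) :
    ∃ y, gsandwich m γ₀ x * u * gsandwich m γ₀ x' = gsandwich m γ₀ y := by
  obtain ⟨y, hy⟩ := exists_gmu_eq_gmu_mul_giota_mul_mul_giota_mul_gmu x γ₀ u γ₀ x'
  exact ⟨y, by simp only [gsandwich, ← hy, ← mul_assoc]⟩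

inductive NF (m : S → Γ → S → S) (γ₀ : Γ)
  | letter (γ : Γ)
  | word (α : Option Γ) (x : S) (β : Option Γ)

namespace NF

instance : Mul (NF m γ₀) where
  mul
    | letter γ, letter _ => letter γ
    | letter γ, word _ x β => word (some γ) x β
    | word α x β, letter γ => word α x (some (β.getD γ))
    | word α x β, word α' y β' => word α (m x (β.getD (α'.getD γ₀)) y) β'

instance [IsGammaAssoc m] : Semigroup (NF m γ₀) where
  mul_assoc := by
    rintro (_ | ⟨_, _, _⟩) (_ | ⟨_, _, _⟩) (_ | ⟨_, _, _⟩) <;>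
      simp [HMul.hMul, Mul.mul, IsGammaAssoc.assoc]

def ofLetter : S ⊕ Γ → NF m γ₀
  | Sum.inl x => word none x none
  | Sum.inr γ => letter γ

theorem gCon_le_ker [IsGammaAssoc m] :
    GCon m γ₀ ≤ Con.ker (FreeSemigroup.lift (ofLetter (m := m) (γ₀ := γ₀))) := by
  refine Con.conGen_le.mpr ?_
  rintro _ _ (⟨γ₁, γ₂, rfl, rfl⟩ | ⟨x, y, γ, rfl, rfl⟩ | ⟨x, y, rfl, rfl⟩) <;> rfl

def ofUSem [IsGammaAssoc m] (u : USem m γ₀) : NF m γ₀ :=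
  Con.liftOn u (FreeSemigroup.lift ofLetter) fun _ _ h => gCon_le_ker h

theorem ofUSem_giota [IsGammaAssoc m] (γ : Γ) : ofUSem (giota m γ₀ γ) = letter γ := rfl

theorem ofUSem_gsandwich [IsGammaAssoc m] (x : S) :
    ofUSem (gsandwich m γ₀ x) = word (some γ₀) x (some γ₀) := rfl

end NF

theorem gsandwich_injective [IsGammaAssoc m] : Function.Injective (gsandwich m γ₀) := by
  intro x y h
  simpa [NF.ofUSem_gsandwich] using congrArg NF.ofUSem h

theorem gsandwich_mem_USem' [IsGammaAssoc m] (x : S) : gsandwich m γ₀ x ∈ USem' m γ₀ := by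
  rintro ⟨γ, h⟩
  simpa [NF.ofUSem_gsandwich, NF.ofUSem_giota] using congrArg NF.ofUSem h

end UniversalSemigroup

theorem stmt_general (S Γ : Type) (m : S → Γ → S → S)
    (assoc : ∀ (a b c : S) (α β : Γ), m (m a α b) β c = m a α (m b β c)) (γ₀ : Γ) (ε₀ : S) (hprim : PrimAt m γ₀ ε₀) :
    giota m γ₀ γ₀ * gmu m γ₀ ε₀ * giota m γ₀ γ₀ ∈ USem' m γ₀ ∧
    (giota m γ₀ γ₀ * gmu m γ₀ ε₀ * giota m γ₀ γ₀) * (giota m γ₀ γ₀ * gmu m γ₀ ε₀ * giota m γ₀ γ₀) =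
      giota m γ₀ γ₀ * gmu m γ₀ ε₀ * giota m γ₀ γ₀ ∧
    ∀ f ∈ USem' m γ₀, f * f = f →
      (giota m γ₀ γ₀ * gmu m γ₀ ε₀ * giota m γ₀ γ₀) * f = f →
      f * (giota m γ₀ γ₀ * gmu m γ₀ ε₀ * giota m γ₀ γ₀) = f →
      f = giota m γ₀ γ₀ * gmu m γ₀ ε₀ * giota m γ₀ γ₀ := by
  have : IsGammaAssoc m := ⟨assoc⟩
  rw [← gsandwich.eq_1]
  refine ⟨gsandwich_mem_USem' ε₀, by rw [gsandwich_mul_gsandwich, hprim.1], ?_⟩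
  intro f _ hff hef hfe
  obtain ⟨y, rfl⟩ : ∃ y, f = gsandwich m γ₀ y := by
    obtain ⟨y, hy⟩ := exists_gsandwich_eq_gsandwich_mul_mul_gsandwich ε₀ f ε₀
    rw [hef, hfe] at hy
    exact ⟨y, hy⟩
  simp only [gsandwich_mul_gsandwich, gsandwich_injective.eq_iff] at hff hef hfe
  rw [hprim.2 y hff hef hfe]

theorem stmt (S Γ : Type) [Nonempty S] [Nonempty Γ] (m : S → Γ → S → S)
    (assoc : ∀ (a b c : S) (α β : Γ), m (m a α b) β c = m a α (m b β c)) (γ₀ : Γ) (hcs : CSimpleAt m γ₀) (ε₀ : S) (hprim : PrimAt m γ₀ ε₀) :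
    giota m γ₀ γ₀ * gmu m γ₀ ε₀ * giota m γ₀ γ₀ ∈ USem' m γ₀ ∧
    (giota m γ₀ γ₀ * gmu m γ₀ ε₀ * giota m γ₀ γ₀) * (giota m γ₀ γ₀ * gmu m γ₀ ε₀ * giota m γ₀ γ₀) =
      giota m γ₀ γ₀ * gmu m γ₀ ε₀ * giota m γ₀ γ₀ ∧
    ∀ f ∈ USem' m γ₀, f * f = f →
      (giota m γ₀ γ₀ * gmu m γ₀ ε₀ * giota m γ₀ γ₀) * f = f →
      f * (giota m γ₀ γ₀ * gmu m γ₀ ε₀ * giota m γ₀ γ₀) = f →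
      f = giota m γ₀ γ₀ * gmu m γ₀ ε₀ * giota m γ₀ γ₀ :=
  stmt_general S Γ m assoc γ₀ ε₀ hprim
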